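/- Let G be a group such that ℤ[G] has finitely detectable full left ideals. Then for every n, the matrix ring M_n(ℤ[G]) has finitely detectable units: any A ∈ M_n(ℤ[G]) whose image in M_n(ℤ[G/H]) is invertible for every finite-index normal subgroup H of G is itself invertible in M_n(ℤ[G]). -/

import Mathlib

/-- `ℤ[G]` has finitely detectable full left ideals. -/
def FinitelyDetectableFullLeftIdeals (G : Type*) [Group G] : Prop :=
  ∀ I : Ideal (MonoidAlgebra ℤ G),
    (∀ (H : Subgroup G) (hN : H.Normal) (_ : H.FiniteIndex),
      Ideal.map (MonoidAlgebra.mapDomainRingHom ℤ (@QuotientGroup.mk' G _ H hN)) I = ⊤) →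
    I = ⊤

/-!
Let `A` be invertible modulo every finite quotient of `G`. Its row space `N ⊆ ℤ[G]ⁿ` then
surjects onto every `ℤ[G/H]ⁿ`, and such a submodule is everything, by induction on `n`: the
first coordinates of `N` form a left ideal that is full modulo every `H`, so some `v ∈ N` has
first coordinate `1`; subtracting multiples of `v` hclears to the submodule of tails. Hence `A`
has a left inverse `B`. Modulo each `H`, `B` is the inverse of `A`, so `B` has a left inverse `C`
as well, and `C = C * B * A = A`.
-/

open Function Matrix

theorem MonoidAlgebra.mapDomain_surjective {R M N : Type*} [Semiring R] {f : M → N}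
    (hf : Surjective f) : Surjective (MonoidAlgebra.mapDomain (R := R) f) := by
  intro y
  obtain ⟨x, hx⟩ := Finsupp.mapDomain_surjective hf y.coeff
  exact ⟨.ofCoeff x, by ext; simp [hx]⟩

def Fin.consZeroLinearMap (R : Type*) [Semiring R] (k : ℕ) :
    (Fin k → R) →ₗ[R] (Fin (k + 1) → R) where
  toFun w := Fin.cons (0 : R) w
  map_add' w w' := by ext i; cases i using Fin.cases <;> simp
  map_smul' r w := by ext i; cases i using Fin.cases <;> simp

theorem Fin.tail_mem_comap_consZeroLinearMap_iff {R : Type*} [Semiring R] {k : ℕ}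
    {N : Submodule R (Fin (k + 1) → R)} {u : Fin (k + 1) → R} (hu : u 0 = 0) :
    Fin.tail u ∈ N.comap (Fin.consZeroLinearMap R k) ↔ u ∈ N := by
  rw [Submodule.mem_comap]
  show Fin.cons (0 : R) (Fin.tail u) ∈ N ↔ u ∈ N
  rw [← hu, Fin.cons_self_tail]

section Detection

variable {R ι : Type*} [Ring R] {S : ι → Type*} [∀ i, Ring (S i)] (f : ∀ i, R →+* S i)

def DetectsFullLeftIdeals : Prop :=
  ∀ I : Ideal R, (∀ i, I.map (f i) = ⊤) → I = ⊤

variable {f}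

theorem Submodule.eq_top_of_forall_exists_comp_eq (hf : DetectsFullLeftIdeals f) {k : ℕ}
    (N : Submodule R (Fin k → R)) (hN : ∀ i (y : Fin k → S i), ∃ x ∈ N, f i ∘ x = y) :
    N = ⊤ := by
  induction k with
  | zero => exact Subsingleton.elim _ _
  | succ k ih =>
    obtain ⟨v, hvN, hv0⟩ : ∃ v ∈ N, v 0 = 1 := by
      suffices N.map (LinearMap.proj 0) = ⊤ by simpa using this.ge (Submodule.mem_top (x := 1))
      refine hf _ fun i => (Ideal.eq_top_iff_one _).2 ?_
      obtain ⟨x, hxN, hx⟩ := hN i (Fin.cons 1 0)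
      have hx0 : f i (x 0) = 1 := by simpa using congrFun hx 0
      exact hx0 ▸ Ideal.mem_map_of_mem (f i) ⟨x, hxN, rfl⟩
    have hclear : ∀ x : Fin (k + 1) → R, (x - x 0 • v) 0 = 0 := fun x => by simp [hv0]
    have htail : N.comap (Fin.consZeroLinearMap R k) = ⊤ := by
      refine ih _ fun i z => ?_
      obtain ⟨x, hxN, hx⟩ := hN i (Fin.cons 0 z)
      refine ⟨Fin.tail (x - x 0 • v), (Fin.tail_mem_comap_consZeroLinearMap_iff (hclear x)).2
        (N.sub_mem hxN (N.smul_mem _ hvN)), funext fun j => ?_⟩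
      have hx0 : f i (x 0) = 0 := by simpa using congrFun hx 0
      have hxj : f i (x j.succ) = z j := by simpa using congrFun hx j.succ
      simp [Fin.tail, hxj, hx0]
    refine eq_top_iff.2 fun x _ => ?_
    have hx := (Fin.tail_mem_comap_consZeroLinearMap_iff (hclear x)).1 (htail ▸ Submodule.mem_top)
    simpa using N.add_mem hx (N.smul_mem (x 0) hvN)

theorem Matrix.exists_mul_eq_one_of_forall_isUnit_map (hf : DetectsFullLeftIdeals f)
    (hsurj : ∀ i, Surjective (f i)) {n : ℕ} {A : Matrix (Fin n) (Fin n) R}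
    (hA : ∀ i, IsUnit (A.map (f i))) : ∃ B, B * A = 1 := by
  rw [← vecMul_surjective_iff_exists_left_inverse, ← Matrix.coe_vecMulLinear,
    ← LinearMap.range_eq_top]
  refine Submodule.eq_top_of_forall_exists_comp_eq hf _ fun i y => ?_
  obtain ⟨w, rfl⟩ := vecMul_surjective_iff_exists_left_inverse.2 (hA i).exists_left_inv y
  obtain ⟨w', rfl⟩ := (hsurj i).comp_left w
  exact ⟨w' ᵥ* A, ⟨w', rfl⟩, funext (RingHom.map_vecMul (f i) A w')⟩

theorem Matrix.isUnit_of_forall_isUnit_map (hf : DetectsFullLeftIdeals f)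
    (hsurj : ∀ i, Surjective (f i)) {n : ℕ} {A : Matrix (Fin n) (Fin n) R}
    (hA : ∀ i, IsUnit (A.map (f i))) : IsUnit A := by
  obtain ⟨B, hBA⟩ := exists_mul_eq_one_of_forall_isUnit_map hf hsurj hA
  have hB : ∀ i, IsUnit (B.map (f i)) := fun i => by
    have hmul : B.map (f i) * A.map (f i) = 1 := by
      rw [← Matrix.map_mul, hBA, Matrix.map_one _ (map_zero _) (map_one _)]
    obtain ⟨u, hu⟩ := hA i
    exact ⟨u⁻¹, Units.inv_eq_of_mul_eq_one_left (hu ▸ hmul)⟩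
  obtain ⟨C, hCB⟩ := exists_mul_eq_one_of_forall_isUnit_map hf hsurj hB
  have hAB : A * B = 1 := left_inv_eq_right_inv hCB hBA ▸ hCB
  exact ⟨⟨A, B, hAB, hBA⟩, rfl⟩

end Detection

/-- If `ℤ[G]` has finitely detectable full left ideals then every matrix ring
`M_n(ℤ[G])` has finitely detectable units. -/
theorem stmt14 (G : Type*) [Group G] (hG : FinitelyDetectableFullLeftIdeals G)
    (n : ℕ) (A : Matrix (Fin n) (Fin n) (MonoidAlgebra ℤ G))
    (h : ∀ (H : Subgroup G) (hN : H.Normal) (_ : H.FiniteIndex),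
      IsUnit (A.map (MonoidAlgebra.mapDomainRingHom ℤ (@QuotientGroup.mk' G _ H hN)))) :
    IsUnit A := by
  have : ∀ H : {H : Subgroup G // H.Normal ∧ H.FiniteIndex}, H.1.Normal := fun H => H.2.1
  let f := fun H : {H : Subgroup G // H.Normal ∧ H.FiniteIndex} =>
    MonoidAlgebra.mapDomainRingHom ℤ (QuotientGroup.mk' H.1)
  have hf : DetectsFullLeftIdeals f := fun I hI => hG I fun H hN hH => hI ⟨H, hN, hH⟩
  exact isUnit_of_forall_isUnit_map hf
    (fun H => MonoidAlgebra.mapDomain_surjective (QuotientGroup.mk'_surjective _))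
    (fun H => h _ _ H.2.2)
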